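/- arXiv:2508.18957 — 7 statements merged into one kernel-verified Lean document; each statement's English description precedes it below -/
import Mathlib

section
/- Every acyclic digraph has a majority coloring with 2 colors, i.e., a function c : V → Fin 2 such that every vertex v has at least as many out-neighbours of color different from c(v) as out-neighbours of color c(v). -/
/-- Every finite acyclic digraph has a majority coloring with 2 colors. -/
theorem stmt_2 {V : Type*} [Fintype V] (A : V → V → Prop)
    (hacyc : ∀ v : V, ¬ Relation.TransGen A v v) :
    ∃ c : V → Fin 2, ∀ v : V,
      {u : V | A v u ∧ c u = c v}.ncard ≤ {u : V | A v u ∧ c u ≠ c v}.ncard := by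
  classical
  -- The relation "u is an out-neighbour of v" is well-founded.
  have hwf : WellFounded (fun u v => A v u) := by
    have h1 : IsTrans V (fun u v => Relation.TransGen A v u) :=
      ⟨fun a b c hab hbc => hbc.trans hab⟩
    have h2 : IsIrrefl V (fun u v => Relation.TransGen A v u) :=
      ⟨fun a h => hacyc a h⟩
    have htr : WellFounded (fun u v => Relation.TransGen A v u) :=
      Finite.wellFounded_of_trans_of_irrefl _
    exact Subrelation.wf (fun h => Relation.TransGen.single h) htr
  set c : V → Fin 2 := hwf.fix (fun v ih =>
    if {u : V | ∃ h : A v u, ih u h = 0}.ncard ≤ {u : V | ∃ h : A v u, ih u h = 1}.ncard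
    then 0 else 1) with hcdef
  have hc : ∀ v, c v =
      if {u : V | A v u ∧ c u = 0}.ncard ≤ {u : V | A v u ∧ c u = 1}.ncard
      then 0 else 1 := by
    intro v
    rw [hcdef, WellFounded.fix_eq]
    simp only [exists_prop]
  refine ⟨c, fun v => ?_⟩
  have hne1 : ∀ x : Fin 2, x ≠ 0 ↔ x = 1 := by decide
  have hne0 : ∀ x : Fin 2, x ≠ 1 ↔ x = 0 := by decide
  by_cases h : {u : V | A v u ∧ c u = 0}.ncard ≤ {u : V | A v u ∧ c u = 1}.ncard
  · have hv : c v = 0 := by rw [hc v, if_pos h]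
    rw [hv]
    have : {u : V | A v u ∧ c u ≠ 0} = {u : V | A v u ∧ c u = 1} := by
      ext u; simp [hne1]
    rw [this]; exact h
  · have hv : c v = 1 := by rw [hc v, if_neg h]
    rw [hv]
    have : {u : V | A v u ∧ c u ≠ 1} = {u : V | A v u ∧ c u = 0} := by
      ext u; simp [hne0]
    rw [this]
    omega
end

section
/- Every 2-edge-colored finite graph G has a majority partition with 4 sets, i.e., a 4-partition (V1, V2, V3, V4) of V such that for each color c ∈ {1,2}, each i, and every v ∈ Vi, the number of edges of color c from v to vertices in Vi is at most the number of edges of color c from v to vertices outside Vi. -/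
/-!
For a single graph, a 2-coloring of the vertices with the fewest monochromatic edges is a majority
coloring: recoloring a vertex that has more neighbours of its own color than of the other would
remove monochromatic edges. Taking such a 2-coloring for the edges of each color separately, the
common refinement of the two is a 4-coloring, and refining a majority coloring keeps it one.
-/

open Finset

section

variable {V : Type*}

theorem Fintype.sum_sum_eq_two_nsmul_add_sum_sum_compl {M : Type*} [AddCommMonoid M] [Fintype V]
    [DecidableEq V] (F : V → V → M) (hF : ∀ a b, F a b = F b a) (v : V) (hv : F v v = 0) :
    ∑ a, ∑ b, F a b = 2 • ∑ b, F v b + ∑ a ∈ {v}ᶜ, ∑ b ∈ {v}ᶜ, F a b := by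
  have hcol : ∑ a ∈ {v}ᶜ, F a v = ∑ b, F v b := by
    rw [Fintype.sum_eq_add_sum_compl v (F v), hv, zero_add]
    exact Finset.sum_congr rfl fun a _ => hF a v
  rw [Fintype.sum_eq_add_sum_compl v]
  simp_rw [Fintype.sum_eq_add_sum_compl v (F _)]
  rw [sum_add_distrib, hcol, ← Fintype.sum_eq_add_sum_compl v (F v), two_nsmul, add_assoc]

namespace SimpleGraph

def IsMajorityColoring {α : Type*} (H : SimpleGraph V) (p : V → α) : Prop :=
  ∀ v, {u | H.Adj v u ∧ p u = p v}.ncard ≤ {u | H.Adj v u ∧ p u ≠ p v}.ncard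

theorem IsMajorityColoring.of_comp [Finite V] {α β : Type*} {H : SimpleGraph V} {p : V → α}
    {f : α → β} (h : H.IsMajorityColoring (f ∘ p)) : H.IsMajorityColoring p := fun v =>
  calc {u | H.Adj v u ∧ p u = p v}.ncard
      ≤ {u | H.Adj v u ∧ f (p u) = f (p v)}.ncard :=
        Set.ncard_le_ncard fun _ ⟨hadj, hpu⟩ => ⟨hadj, congrArg f hpu⟩
    _ ≤ {u | H.Adj v u ∧ f (p u) ≠ f (p v)}.ncard := h v
    _ ≤ {u | H.Adj v u ∧ p u ≠ p v}.ncard :=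
        Set.ncard_le_ncard fun _ ⟨hadj, hfpu⟩ => ⟨hadj, fun hpu => hfpu (congrArg f hpu)⟩

theorem exists_isMajorityColoring_fin_two [Finite V] (H : SimpleGraph V) :
    ∃ q : V → Fin 2, H.IsMajorityColoring q := by
  classical
  have := Fintype.ofFinite V
  let mono (q : V → Fin 2) (a b : V) : ℕ := if H.Adj a b ∧ q b = q a then 1 else 0
  have mono_symm (q : V → Fin 2) (a b : V) : mono q a b = mono q b a := by
    simp only [mono, H.adj_comm, eq_comm]
  have mono_self (q : V → Fin 2) (a : V) : mono q a a = 0 := by simp [mono]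
  have row_eq_ncard (q : V → Fin 2) (v : V) :
      ∑ b, mono q v b = {u | H.Adj v u ∧ q u = q v}.ncard := by
    rw [sum_boole, Set.ncard_eq_toFinset_card', Set.toFinset_ofPred, Nat.cast_id]
  obtain ⟨q, -, hq⟩ := exists_min_image univ (fun q => ∑ a, ∑ b, mono q a b) univ_nonempty
  refine ⟨q, fun v => ?_⟩
  set q' := Function.update q v (q v + 1)
  have hrest : ∑ a ∈ {v}ᶜ, ∑ b ∈ {v}ᶜ, mono q' a b = ∑ a ∈ {v}ᶜ, ∑ b ∈ {v}ᶜ, mono q a b :=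
    sum_congr rfl fun a ha => sum_congr rfl fun b hb => by
      simp only [mono, q', Function.update_of_ne (mem_compl.1 ha ∘ mem_singleton.2),
        Function.update_of_ne (mem_compl.1 hb ∘ mem_singleton.2)]
  have hflip : {u | H.Adj v u ∧ q' u = q' v} = {u | H.Adj v u ∧ q u ≠ q v} := by
    ext u
    simp only [Set.mem_ofPred_eq, and_congr_right_iff]
    intro hadj
    simp only [q', Function.update_self, Function.update_of_ne hadj.ne']
    generalize q u = a; generalize q v = b
    revert a b; decide
  have hmin := hq q' (mem_univ _)
  rw [Fintype.sum_sum_eq_two_nsmul_add_sum_sum_compl _ (mono_symm q) v (mono_self q v),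
    Fintype.sum_sum_eq_two_nsmul_add_sum_sum_compl _ (mono_symm q') v (mono_self q' v),
    hrest, row_eq_ncard, row_eq_ncard, hflip] at hmin
  simpa using hmin

def colorClass (G : SimpleGraph V) (col : V → V → Fin 2) (hsym : ∀ u v : V, col u v = col v u)
    (c : Fin 2) : SimpleGraph V where
  Adj u v := G.Adj u v ∧ col u v = c
  symm := ⟨fun u v h => ⟨h.1.symm, hsym u v ▸ h.2⟩⟩
  loopless := ⟨fun v h => G.loopless.irrefl v h.1⟩

end SimpleGraph

end

/-- Every 2-edge-colored finite graph has a majority partition with 4 sets. -/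
theorem stmt_5 {V : Type*} [Fintype V] (G : SimpleGraph V)
    (col : V → V → Fin 2) (hsym : ∀ u v : V, col u v = col v u) :
    ∃ p : V → Fin 4, ∀ (c : Fin 2) (v : V),
      {u : V | G.Adj v u ∧ col v u = c ∧ p u = p v}.ncard ≤
        {u : V | G.Adj v u ∧ col v u = c ∧ p u ≠ p v}.ncard := by
  choose q hq using fun c => (G.colorClass col hsym c).exists_isMajorityColoring_fin_two
  let e : (Fin 2 → Fin 2) ≃ Fin 4 := Fintype.equivFinOfCardEq (by simp)
  refine ⟨e ∘ fun v c => q c v, fun c v => ?_⟩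
  have hc : (fun x => e.symm x c) ∘ e ∘ (fun v c => q c v) = q c := by
    funext v; simp
  have := (hc ▸ hq c : SimpleGraph.IsMajorityColoring _ _).of_comp v
  simpa only [SimpleGraph.colorClass, and_assoc] using this
end

section
/- Let H be the 2-edge-colored graph on vertices {a5,a6,a7,x1,x2,x3,x4} with red edges {x1x2, x4x1, x4x2, x4x3} ∪ {x1a, x2a : a ∈ {a5,a6,a7}} and blue edges {x3x1, x3x2} ∪ {x3a, x4a : a ∈ {a5,a6,a7}}. Then there is no labeling l : V(H) → Fin 3 with l(a5)=l(a6)=l(a7) such that for every vertex v and every color c, the number of edges of color c from v to vertices with the same label as v is at most the number of edges of color c from v to vertices with a different label. -/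
/- The gadget graph `H` on 7 vertices: vertices `0,1,2` are `a5,a6,a7` and
vertices `3,4,5,6` are `x1,x2,x3,x4`. -/

/-- Red edges of the gadget. -/
def gadgetRed (u v : Fin 7) : Prop :=
  (u, v) ∈ ([(3,4), (6,3), (6,4), (6,5),
             (3,0), (3,1), (3,2), (4,0), (4,1), (4,2)] : List (Fin 7 × Fin 7)) ∨
  (v, u) ∈ ([(3,4), (6,3), (6,4), (6,5),
             (3,0), (3,1), (3,2), (4,0), (4,1), (4,2)] : List (Fin 7 × Fin 7))

/-- Blue edges of the gadget. -/
def gadgetBlue (u v : Fin 7) : Prop :=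
  (u, v) ∈ ([(5,3), (5,4), (5,0), (5,1), (5,2),
             (6,0), (6,1), (6,2)] : List (Fin 7 × Fin 7)) ∨
  (v, u) ∈ ([(5,3), (5,4), (5,0), (5,1), (5,2),
             (6,0), (6,1), (6,2)] : List (Fin 7 × Fin 7))

instance : DecidableRel gadgetRed := fun u v => by unfold gadgetRed; infer_instance
instance : DecidableRel gadgetBlue := fun u v => by unfold gadgetBlue; infer_instance

/-- There is no 3-labeling of the gadget graph giving `a5, a6, a7` the same label and
satisfying the majority condition at every vertex for both colors. -/
theorem stmt_8 :
    ¬ ∃ l : Fin 7 → Fin 3, (l 0 = l 1 ∧ l 1 = l 2) ∧ ∀ v : Fin 7,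
      ((Finset.univ.filter (fun u : Fin 7 => gadgetRed v u ∧ l u = l v)).card ≤
        (Finset.univ.filter (fun u : Fin 7 => gadgetRed v u ∧ l u ≠ l v)).card) ∧
      ((Finset.univ.filter (fun u : Fin 7 => gadgetBlue v u ∧ l u = l v)).card ≤
        (Finset.univ.filter (fun u : Fin 7 => gadgetBlue v u ∧ l u ≠ l v)).card) := by
  rintro ⟨l, ⟨h01, h12⟩, h⟩
  have h3 := h 3; have h4 := h 4; have h5 := h 5; have h6 := h 6
  simp only [Finset.card_filter, Fin.sum_univ_seven] at h3 h4 h5 h6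
  simp only [gadgetRed, gadgetBlue, List.mem_cons, List.not_mem_nil, Prod.mk.injEq] at h3 h4 h5 h6
  simp at h3 h4 h5 h6
  rw [h01, h12] at h3 h4 h5 h6
  set a := l 2 with ha
  set x3 := l 3 with hx3
  set x4 := l 4 with hx4
  set x5 := l 5 with hx5
  set x6 := l 6 with hx6
  clear_value a x3 x4 x5 x6
  clear h h01 h12 ha hx3 hx4 hx5 hx6 l
  revert h3 h4 h5 h6
  fin_cases a <;> fin_cases x3 <;> fin_cases x4 <;> fin_cases x5 <;> fin_cases x6 <;> decide
end

section
/- Let H be the 2-edge-colored gadget graph on vertices {a1,a2,a3,x1,x2,x3,x4} with red edges {x1x2, x4x1, x4x2, x4x3, x1a1, x1a2, x1a3, x2a1, x2a2, x2a3} and blue edges {x3x1, x3x2, x3a1, x3a2, x3a3, x4a1, x4a2, x4a3}. For every labeling of {a1,a2,a3} by elements of Fin 3 that is NOT constant, there exists an extension l : V(H) → Fin 3 such that every vertex of {x1,x2,x3,x4} satisfies the majority condition: for each color c, the number of c-colored edges from it to same-label vertices is at most the number of c-colored edges from it to different-label vertices. -/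
def gadgetWitness : Fin 3 → Fin 3 → Fin 3 → (Fin 7 → Fin 3)
  | 0, 0, 1 => ![0, 0, 1, 0, 1, 2, 1]
  | 0, 0, 2 => ![0, 0, 2, 0, 1, 2, 1]
  | 0, 1, 0 => ![0, 1, 0, 0, 1, 2, 1]
  | 0, 1, 1 => ![0, 1, 1, 0, 0, 1, 2]
  | 0, 1, 2 => ![0, 1, 2, 0, 0, 1, 2]
  | 0, 2, 0 => ![0, 2, 0, 0, 1, 2, 1]
  | 0, 2, 1 => ![0, 2, 1, 0, 0, 1, 2]
  | 0, 2, 2 => ![0, 2, 2, 0, 0, 2, 1]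
  | 1, 0, 0 => ![1, 0, 0, 0, 1, 2, 1]
  | 1, 0, 1 => ![1, 0, 1, 0, 0, 1, 2]
  | 1, 0, 2 => ![1, 0, 2, 0, 0, 1, 2]
  | 1, 1, 0 => ![1, 1, 0, 0, 0, 1, 2]
  | 1, 1, 2 => ![1, 1, 2, 0, 0, 1, 2]
  | 1, 2, 0 => ![1, 2, 0, 0, 0, 1, 2]
  | 1, 2, 1 => ![1, 2, 1, 0, 0, 1, 2]
  | 1, 2, 2 => ![1, 2, 2, 0, 0, 2, 1]
  | 2, 0, 0 => ![2, 0, 0, 0, 1, 2, 1]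
  | 2, 0, 1 => ![2, 0, 1, 0, 0, 1, 2]
  | 2, 0, 2 => ![2, 0, 2, 0, 0, 2, 1]
  | 2, 1, 0 => ![2, 1, 0, 0, 0, 1, 2]
  | 2, 1, 1 => ![2, 1, 1, 0, 0, 1, 2]
  | 2, 1, 2 => ![2, 1, 2, 0, 0, 2, 1]
  | 2, 2, 0 => ![2, 2, 0, 0, 0, 2, 1]
  | 2, 2, 1 => ![2, 2, 1, 0, 0, 2, 1]
  | _, _, _ => ![0,0,0,0,0,0,0]

/-- Every non-constant 3-labeling of `a1, a2, a3` extends to a 3-labeling of the gadget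
graph satisfying the majority condition at `x1, x2, x3, x4` for both colors. -/
theorem stmt_9 (la0 la1 la2 : Fin 3) (hnc : ¬ (la0 = la1 ∧ la1 = la2)) :
    ∃ l : Fin 7 → Fin 3, l 0 = la0 ∧ l 1 = la1 ∧ l 2 = la2 ∧
      ∀ v ∈ ({3, 4, 5, 6} : Finset (Fin 7)),
      ((Finset.univ.filter (fun u : Fin 7 => gadgetRed v u ∧ l u = l v)).card ≤
        (Finset.univ.filter (fun u : Fin 7 => gadgetRed v u ∧ l u ≠ l v)).card) ∧
      ((Finset.univ.filter (fun u : Fin 7 => gadgetBlue v u ∧ l u = l v)).card ≤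
        (Finset.univ.filter (fun u : Fin 7 => gadgetBlue v u ∧ l u ≠ l v)).card) := by
  refine ⟨gadgetWitness la0 la1 la2, ?_⟩
  revert hnc
  fin_cases la0 <;> fin_cases la1 <;> fin_cases la2 <;> intro hnc <;>
    first
      | set_option maxRecDepth 10000 in decide
      | exact absurd ⟨rfl, rfl⟩ hnc
end

section
/- For every integer k ≥ 1 there exists a 2-edge-colored graph G = (V, E_red ∪ E_blue) such that both the red subgraph (V, E_red) and the blue subgraph (V, E_blue) are k-edge-connected, yet there is no 2-partition (X,Y) of V for which both the red bipartite subgraph induced by edges between X and Y and the blue bipartite subgraph induced by edges between X and Y are connected spanning subgraphs. -/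
/-- The spanning subgraph of `B` whose edges are the edges of `B` with exactly one
endpoint in `X`. -/
def crossSubgraph {V : Type*} (B : SimpleGraph V) (X : Set V) : SimpleGraph V where
  Adj u v := B.Adj u v ∧ ¬ ((u ∈ X) ↔ (v ∈ X))
  symm := ⟨fun u v h => ⟨h.1.symm, fun hiff => h.2 hiff.symm⟩⟩
  loopless := ⟨fun v h => h.2 Iff.rfl⟩

/-- `G` is `k`-edge-connected: more than one vertex, and deleting any set of fewer than
`k` edges leaves it connected. -/
def KEdgeConnected {V : Type*} (G : SimpleGraph V) (k : ℕ) : Prop :=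
  1 < Nat.card V ∧ ∀ s : Set (Sym2 V), s.ncard < k → (G.deleteEdges s).Connected

/-!
Take vertices `(a, c, i) ∈ Bool × Bool × Fin (k + 2)`. Red edges change `a` and keep `c` or `i`;
blue edges change `c` and keep `a` or change `i`, so no pair is joined in both colours.
Two vertices `(a, c, i)`, `(!a, d, j)` are joined by the red walks through `(!a, c, l)` and
`(a, d, l)`, which are edge-disjoint for the `k` indices `l ≠ i, j`; so fewer than `k` deleted
edges cannot separate them, nor (going through the other side) two vertices with the same `a`.
Blue is handled in the same way with the walks through `(a, !c, l)` and `(a, c, l)`.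
Every red edge changes `a`, so along red edges crossing `X` the truth value of
`a = true ↔ v ∈ X` is invariant; in blue, `c = true ↔ v ∈ X` is. At `(true, true, i)` and
`(true, false, i)` the first invariant says both vertices lie on the same side of `X`, the
second that they lie on different sides.
-/

namespace SimpleGraph

variable {V : Type*} {G : SimpleGraph V}

theorem isEdgeReachable_of_pairwise_disjoint_edges {ι : Type*} {k : ℕ} {u v : V}
    (p : ι → G.Walk u v) (hp : Pairwise fun i j ↦ (p i).edges.Disjoint (p j).edges)
    (hk : k ≤ ENat.card ι) : G.IsEdgeReachable k u v := by
  intro s hs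
  by_contra hunreach
  have hit : ∀ i, ∃ e ∈ (p i).edges, e ∈ s := fun i ↦ by
    by_contra! h
    exact hunreach ⟨(p i).toDeleteEdges s h⟩
  choose f hf_mem hf_s using hit
  have hf_inj : Function.Injective fun i ↦ (⟨f i, hf_s i⟩ : s) := fun i j hij ↦ by
    by_contra hne
    have hij : f i = f j := congrArg Subtype.val hij
    exact hp hne (hf_mem i) (hij ▸ hf_mem j)
  exact (hs.trans_le (hk.trans (ENat.card_le_card_of_injective hf_inj))).false

end SimpleGraph

theorem KEdgeConnected.of_isEdgeConnected {V : Type*} [Finite V] {G : SimpleGraph V} {k : ℕ}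
    (hV : 1 < Nat.card V) (hG : G.IsEdgeConnected k) : KEdgeConnected G k := by
  refine ⟨hV, fun s hs ↦ ?_⟩
  have : Nonempty V := (Nat.card_pos_iff.mp (by omega)).1
  refine ⟨fun u v ↦ hG u v ?_⟩
  rw [← (Set.toFinite s).cast_ncard_eq]
  exact_mod_cast hs

theorem iff_mem_iff_of_reachable_crossSubgraph {V : Type*} {G : SimpleGraph V} {P : V → Prop}
    (hP : ∀ u v, G.Adj u v → (P u ↔ ¬ P v)) {X : Set V} {u v : V}
    (h : (crossSubgraph G X).Reachable u v) : (P u ↔ u ∈ X) ↔ (P v ↔ v ∈ X) := by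
  obtain ⟨w⟩ := h
  induction w with
  | nil => rfl
  | cons hadj _ ih =>
    have hflip := hP _ _ hadj.1
    have hcross := hadj.2
    rw [← ih]
    tauto

section Construction

variable (α : Type*)

def redGraph : SimpleGraph (Bool × Bool × α) where
  Adj u v := u.1 ≠ v.1 ∧ (u.2.1 = v.2.1 ∨ u.2.2 = v.2.2)
  symm := ⟨fun _ _ h ↦ ⟨h.1.symm, h.2.imp Eq.symm Eq.symm⟩⟩
  loopless := ⟨fun _ h ↦ h.1 rfl⟩

def blueGraph : SimpleGraph (Bool × Bool × α) where
  Adj u v := u.2.1 ≠ v.2.1 ∧ (u.1 = v.1 ∨ u.2.2 ≠ v.2.2)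
  symm := ⟨fun _ _ h ↦ ⟨h.1.symm, h.2.imp Eq.symm Ne.symm⟩⟩
  loopless := ⟨fun _ h ↦ h.1 rfl⟩

variable {α}

@[simp]
theorem redGraph_adj {u v : Bool × Bool × α} :
    (redGraph α).Adj u v ↔ u.1 ≠ v.1 ∧ (u.2.1 = v.2.1 ∨ u.2.2 = v.2.2) := Iff.rfl

@[simp]
theorem blueGraph_adj {u v : Bool × Bool × α} :
    (blueGraph α).Adj u v ↔ u.2.1 ≠ v.2.1 ∧ (u.1 = v.1 ∨ u.2.2 ≠ v.2.2) := Iff.rfl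

theorem not_redGraph_adj_and_blueGraph_adj (u v : Bool × Bool × α) :
    ¬ ((redGraph α).Adj u v ∧ (blueGraph α).Adj u v) := by
  simp only [redGraph_adj, blueGraph_adj]
  tauto

theorem le_enatCard_subtype_ne_and_ne [Fintype α] {k : ℕ} (hk : k + 2 ≤ Fintype.card α)
    (i j : α) : k ≤ ENat.card {l : α // l ≠ i ∧ l ≠ j} := by
  classical
  have hpair : ({i, j} : Finset α).card ≤ 2 := Finset.card_le_two
  have hsub := Finset.card_le_card_sdiff_add_card (s := Finset.univ) (t := {i, j})
  have hcompl : Finset.univ.filter (fun l ↦ l ≠ i ∧ l ≠ j) = Finset.univ \ {i, j} := by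
    ext; simp
  rw [Finset.card_univ] at hsub
  rw [ENat.card_eq_coe_fintype_card, Fintype.card_subtype, hcompl, Nat.cast_le]
  omega

open SimpleGraph

theorem redGraph_isEdgeReachable [Fintype α] {k : ℕ} (hk : k + 2 ≤ Fintype.card α)
    (a c d : Bool) (i j : α) : (redGraph α).IsEdgeReachable k (a, c, i) (!a, d, j) := by
  refine isEdgeReachable_of_pairwise_disjoint_edges (ι := {l : α // l ≠ i ∧ l ≠ j})
    (fun l ↦ .cons (v := (!a, c, l.1)) (by simp) <|
      .cons (v := (a, d, l.1)) (by simp) <| .cons (v := (!a, d, j)) (by simp) .nil)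
    ?_ (le_enatCard_subtype_ne_and_ne hk i j)
  rintro ⟨l, hli, hlj⟩ ⟨l', _⟩ hne
  have hne : l' ≠ l := fun h ↦ hne (Subtype.ext h.symm)
  simp [Prod.ext_iff, hne, hli.symm, hlj.symm]

theorem blueGraph_isEdgeReachable [Fintype α] {k : ℕ} (hk : k + 2 ≤ Fintype.card α)
    (a b c : Bool) (i j : α) : (blueGraph α).IsEdgeReachable k (a, c, i) (b, !c, j) := by
  refine isEdgeReachable_of_pairwise_disjoint_edges (ι := {l : α // l ≠ i ∧ l ≠ j})
    (fun l ↦ .cons (v := (a, !c, l.1)) (by simp) <|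
      .cons (v := (a, c, l.1)) (by simp) <| .cons (v := (b, !c, j)) (by simp [l.2.2]) .nil)
    ?_ (le_enatCard_subtype_ne_and_ne hk i j)
  rintro ⟨l, hli, hlj⟩ ⟨l', _⟩ hne
  have hne : l' ≠ l := fun h ↦ hne (Subtype.ext h.symm)
  simp [Prod.ext_iff, hne, hli.symm, hlj.symm]

theorem redGraph_isEdgeConnected [Fintype α] {k : ℕ} (hk : k + 2 ≤ Fintype.card α) :
    (redGraph α).IsEdgeConnected k := by
  rintro ⟨a, c, i⟩ ⟨b, d, j⟩
  obtain rfl | rfl : b = !a ∨ b = a := by cases a <;> cases b <;> simp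
  · exact redGraph_isEdgeReachable hk a c d i j
  · exact (redGraph_isEdgeReachable hk b c d i j).trans
      (redGraph_isEdgeReachable hk b d d j j).symm

theorem blueGraph_isEdgeConnected [Fintype α] {k : ℕ} (hk : k + 2 ≤ Fintype.card α) :
    (blueGraph α).IsEdgeConnected k := by
  rintro ⟨a, c, i⟩ ⟨b, d, j⟩
  obtain rfl | rfl : d = !c ∨ d = c := by cases c <;> cases d <;> simp
  · exact blueGraph_isEdgeReachable hk a b c i j
  · exact (blueGraph_isEdgeReachable hk a b d i j).trans
      (blueGraph_isEdgeReachable hk b b d j j).symm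

theorem not_exists_crossSubgraph_connected [Nonempty α] :
    ¬ ∃ X, (crossSubgraph (redGraph α) X).Connected ∧
      (crossSubgraph (blueGraph α) X).Connected := by
  rintro ⟨X, hR, hB⟩
  obtain ⟨i⟩ := ‹Nonempty α›
  have hred := iff_mem_iff_of_reachable_crossSubgraph (P := fun v ↦ v.1 = true)
    (fun u v h ↦ by cases hu : u.1 <;> cases hv : v.1 <;> simp_all)
    (hR.preconnected (true, true, i) (true, false, i))
  have hblue := iff_mem_iff_of_reachable_crossSubgraph (P := fun v ↦ v.2.1 = true)
    (fun u v h ↦ by cases hu : u.2.1 <;> cases hv : v.2.1 <;> simp_all)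
    (hB.preconnected (true, true, i) (true, false, i))
  simp only [true_iff, Bool.false_eq_true, false_iff] at hred hblue
  tauto

end Construction

theorem stmt_13_general (k : ℕ) :
    ∃ (V : Type) (_ : Fintype V) (R B : SimpleGraph V),
      (∀ u v : V, ¬ (R.Adj u v ∧ B.Adj u v)) ∧
      KEdgeConnected R k ∧ KEdgeConnected B k ∧
      ¬ ∃ X : Set V, (crossSubgraph R X).Connected ∧ (crossSubgraph B X).Connected := by
  have hV : 1 < Nat.card (Bool × Bool × Fin (k + 2)) := by
    simp only [Nat.card_eq_fintype_card, Fintype.card_prod, Fintype.card_bool, Fintype.card_fin]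
    omega
  have hk : k + 2 ≤ Fintype.card (Fin (k + 2)) := by simp
  exact ⟨Bool × Bool × Fin (k + 2), inferInstance, redGraph _, blueGraph _,
    not_redGraph_adj_and_blueGraph_adj, .of_isEdgeConnected hV (redGraph_isEdgeConnected hk),
    .of_isEdgeConnected hV (blueGraph_isEdgeConnected hk), not_exists_crossSubgraph_connected⟩

/-- For every `k ≥ 1` there is a 2-edge-colored graph whose red and blue subgraphs are
both `k`-edge-connected but which has no 2-partition whose red and blue crossing
subgraphs are both connected. -/
theorem stmt_13 (k : ℕ) (hk : 1 ≤ k) :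
    ∃ (V : Type) (_ : Fintype V) (R B : SimpleGraph V),
      (∀ u v : V, ¬ (R.Adj u v ∧ B.Adj u v)) ∧
      KEdgeConnected R k ∧ KEdgeConnected B k ∧
      ¬ ∃ X : Set V, (crossSubgraph R X).Connected ∧ (crossSubgraph B X).Connected :=
  stmt_13_general k
end

section
/- Let G be the 2-edge-colored graph obtained from a k-edge-connected k-regular bipartite graph H' = (V1 ∪ V2, E_blue) with |V1| = |V2| ≥ k+1, all of whose edges are blue, by adding a red perfect matching between V1 and V2 (disjoint from the blue edges) and all red edges inside V1 and inside V2. Then (V1, V2) is the unique (up to swapping) 2-partition of V(G) for which the blue bipartite subgraph induced by crossing edges is connected, and for this partition the red bipartite subgraph induced by crossing edges is a perfect matching, hence disconnected (when |V1| ≥ 2). Consequently G has no 2-partition for which both the red and the blue crossing subgraphs are connected. -/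
namespace SimpleGraph

variable {V : Type*}

theorem Reachable.apply_eq_of_forall_adj {α : Sort*} {G : SimpleGraph V} {f : V → α}
    (hf : ∀ u v, G.Adj u v → f u = f v) {u v : V} (h : G.Reachable u v) : f u = f v := by
  obtain ⟨w⟩ := h
  induction w with
  | nil => rfl
  | cons ha _ ih => exact (hf _ _ ha).trans ih

theorem not_preconnected_of_adj_imp_eq_involutive {G : SimpleGraph V} {μ : V → V}
    (hμ : Function.Involutive μ) (hadj : ∀ u v, G.Adj u v → v = μ u) {a b : V}
    (hba : b ≠ a) (hbμ : b ≠ μ a) : ¬ G.Preconnected := by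
  intro hG
  have hpair : ∀ u v, G.Adj u v → (u = a ∨ u = μ a) = (v = a ∨ v = μ a) := by
    intro u v huv
    rw [hadj u v huv, hμ.eq_iff, hμ.injective.eq_iff]
    exact propext or_comm
  have hb := (hG a b).apply_eq_of_forall_adj hpair
  simp only [true_or, eq_iff_iff, true_iff] at hb
  tauto

end SimpleGraph

section crossSubgraph

variable {V : Type*}

theorem crossSubgraph_compl (B : SimpleGraph V) (X : Set V) :
    crossSubgraph B Xᶜ = crossSubgraph B X := by
  ext u v
  simp only [crossSubgraph, Set.mem_compl_iff]
  tauto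

theorem eq_or_eq_compl_of_connected_crossSubgraph {B : SimpleGraph V} {V1 X : Set V}
    (hbip : ∀ u v, B.Adj u v → (u ∈ V1 ↔ v ∉ V1)) (hX : (crossSubgraph B X).Connected) :
    X = V1 ∨ X = V1ᶜ := by
  have hparity : ∀ u v, (crossSubgraph B X).Adj u v →
      (u ∈ X ↔ u ∈ V1) = (v ∈ X ↔ v ∈ V1) := by
    rintro u v ⟨huv, hcross⟩
    have := hbip u v huv
    exact propext (by tauto)
  obtain ⟨v₀⟩ := hX.nonempty
  have hconst : ∀ v, (v₀ ∈ X ↔ v₀ ∈ V1) = (v ∈ X ↔ v ∈ V1) := fun v =>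
    (hX.preconnected v₀ v).apply_eq_of_forall_adj hparity
  by_cases h₀ : v₀ ∈ X ↔ v₀ ∈ V1
  · exact Or.inl (Set.ext fun v => hconst v ▸ h₀)
  · refine Or.inr (Set.ext fun v => ?_)
    have := hconst v ▸ h₀
    rw [Set.mem_compl_iff]
    tauto

theorem crossSubgraph_adj_iff_eq_of_adj_iff {Red : SimpleGraph V} {V1 : Set V} {μ : V → V}
    (hnofix : ∀ v, μ v ≠ v) (hcrossμ : ∀ v, v ∈ V1 ↔ μ v ∉ V1)
    (hred : ∀ u v, Red.Adj u v ↔ u ≠ v ∧ ((u ∈ V1 ↔ v ∈ V1) ∨ v = μ u)) (u v : V) :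
    (crossSubgraph Red V1).Adj u v ↔ v = μ u := by
  have := hcrossμ u
  simp only [crossSubgraph, hred, ne_eq]
  constructor
  · tauto
  · rintro rfl
    exact ⟨⟨(hnofix u).symm, Or.inr rfl⟩, by tauto⟩

end crossSubgraph

theorem stmt_15_general {V : Type*} (k : ℕ) (hk : 1 ≤ k)
    (V1 : Set V) (Bl : SimpleGraph V)
    (hbip : ∀ u v : V, Bl.Adj u v → ((u ∈ V1) ↔ v ∉ V1))
    (hsize : V1.ncard = V1ᶜ.ncard ∧ k + 1 ≤ V1.ncard)
    (μ : V → V) (hinv : ∀ v, μ (μ v) = v) (hnofix : ∀ v, μ v ≠ v)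
    (hcrossμ : ∀ v, (v ∈ V1) ↔ μ v ∉ V1)
    (Red : SimpleGraph V)
    (hred : ∀ u v : V, Red.Adj u v ↔ (u ≠ v ∧ (((u ∈ V1) ↔ (v ∈ V1)) ∨ v = μ u))) :
    (∀ X : Set V, (crossSubgraph Bl X).Connected → (X = V1 ∨ X = V1ᶜ)) ∧
    (∀ u v : V, (crossSubgraph Red V1).Adj u v ↔ v = μ u) ∧
    ¬ (crossSubgraph Red V1).Connected ∧
    ¬ ∃ X : Set V, (crossSubgraph Red X).Connected ∧ (crossSubgraph Bl X).Connected := by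
  have hmatching := crossSubgraph_adj_iff_eq_of_adj_iff hnofix hcrossμ hred
  obtain ⟨a, ha, b, hb, hab⟩ :=
    (Set.one_lt_ncard_iff_nontrivial_and_finite.1 (by omega : 1 < V1.ncard)).1
  have hdisc : ¬ (crossSubgraph Red V1).Connected := fun h =>
    SimpleGraph.not_preconnected_of_adj_imp_eq_involutive hinv (fun u v => (hmatching u v).1)
      hab.symm (fun hbμ => (hcrossμ a).1 ha (hbμ ▸ hb)) h.preconnected
  refine ⟨fun X => eq_or_eq_compl_of_connected_crossSubgraph hbip, hmatching, hdisc, ?_⟩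
  rintro ⟨X, hRed, hBl⟩
  rcases eq_or_eq_compl_of_connected_crossSubgraph hbip hBl with rfl | rfl
  · exact hdisc hRed
  · exact hdisc (crossSubgraph_compl Red V1 ▸ hRed)

/-- Let `Bl` be a `k`-edge-connected `k`-regular bipartite (blue) graph with parts
`V1, V1ᶜ` of equal size at least `k+1`, let `μ` be a red perfect matching between the
parts disjoint from the blue edges, and let `Red` consist of the matching together with
all pairs inside each part.  Then `(V1, V1ᶜ)` is the unique 2-partition whose blue
crossing subgraph is connected; for that partition the red crossing subgraph is exactly
the perfect matching and is disconnected; consequently no 2-partition has both crossing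
subgraphs connected. -/
theorem stmt_15 {V : Type*} [Fintype V] (k : ℕ) (hk : 1 ≤ k)
    (V1 : Set V) (Bl : SimpleGraph V)
    (hbip : ∀ u v : V, Bl.Adj u v → ((u ∈ V1) ↔ v ∉ V1))
    (hreg : ∀ v : V, (Bl.neighborSet v).ncard = k)
    (hec : KEdgeConnected Bl k)
    (hsize : V1.ncard = V1ᶜ.ncard ∧ k + 1 ≤ V1.ncard)
    (μ : V → V) (hinv : ∀ v, μ (μ v) = v) (hnofix : ∀ v, μ v ≠ v)
    (hcrossμ : ∀ v, (v ∈ V1) ↔ μ v ∉ V1) (hdisj : ∀ v, ¬ Bl.Adj v (μ v))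
    (Red : SimpleGraph V)
    (hred : ∀ u v : V, Red.Adj u v ↔ (u ≠ v ∧ (((u ∈ V1) ↔ (v ∈ V1)) ∨ v = μ u))) :
    (∀ X : Set V, (crossSubgraph Bl X).Connected → (X = V1 ∨ X = V1ᶜ)) ∧
    (∀ u v : V, (crossSubgraph Red V1).Adj u v ↔ v = μ u) ∧
    ¬ (crossSubgraph Red V1).Connected ∧
    ¬ ∃ X : Set V, (crossSubgraph Red X).Connected ∧ (crossSubgraph Bl X).Connected :=
  stmt_15_general k hk V1 Bl hbip hsize μ hinv hnofix hcrossμ Red hred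
end

section
/- Let e > 0 be real. Suppose events E_1, ..., E_n each have probability at most p, each E_i is mutually independent of all but at most D of the other events, and e·p·(D+1) ≤ 1 (symmetric Lovász Local Lemma hypothesis). Then with positive probability none of the events occur. -/
/-!
By strong induction on `S` one shows simultaneously that `P(avoid S) > 0` and that
`P(E i ∩ avoid S) ≤ x i · P(avoid S)` for `i ∉ S`. For the second claim split `S` into the
part `S₂` independent of `E i` and the dependent part `S₁`: independence gives
`P(E i ∩ avoid S) ≤ P(E i) P(avoid S₂)`, while adding the events of `S₁` one at a time costs
at most a factor `1 - x j` each, so `P(avoid S) ≥ ∏_{S₁} (1 - x j) · P(avoid S₂)`.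
The symmetric case takes `x i = 1/(D+2)`, for which `x (1-x)^D ≥ 1/(e (D+1))` because
`(1 + 1/(D+1))^(D+1) ≤ e`.
-/

open MeasureTheory Finset

namespace LovaszLocalLemma

variable {Ω ι : Type*}

def avoid (E : ι → Set Ω) (S : Finset ι) : Set Ω := ⋂ j ∈ S, (E j)ᶜ

variable (E : ι → Set Ω)

@[simp] lemma avoid_empty : avoid E ∅ = Set.univ := by simp [avoid]

@[simp] lemma avoid_univ [Fintype ι] : avoid E univ = ⋂ i, (E i)ᶜ := by simp [avoid]

lemma avoid_insert [DecidableEq ι] (i : ι) (S : Finset ι) :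
    avoid E (insert i S) = avoid E S \ E i := by
  simp only [avoid, set_biInter_insert, Set.sdiff_eq, Set.inter_comm]

lemma avoid_anti {S T : Finset ι} (h : S ⊆ T) : avoid E T ⊆ avoid E S :=
  Set.biInter_subset_biInter_left h

variable {E} [MeasurableSpace Ω] [DecidableEq ι] {μ : Measure Ω} [IsFiniteMeasure μ]

lemma measureReal_avoid_insert {i : ι} (hEi : MeasurableSet (E i)) (S : Finset ι) :
    μ.real (avoid E (insert i S)) = μ.real (avoid E S) - μ.real (E i ∩ avoid E S) := by
  rw [avoid_insert, Set.inter_comm, ← measureReal_inter_add_sdiff (s := avoid E S) hEi]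
  ring

variable {x : ι → ℝ}

lemma prod_one_sub_mul_measureReal_avoid_le (hx : ∀ j, x j ≤ 1)
    (hE : ∀ i, MeasurableSet (E i)) {S : Finset ι}
    (hcond : ∀ T ⊂ S, ∀ j ∉ T, μ.real (E j ∩ avoid E T) ≤ x j * μ.real (avoid E T))
    {A B : Finset ι} (hAB : Disjoint A B) (hsub : A ∪ B ⊆ S) :
    (∏ j ∈ B, (1 - x j)) * μ.real (avoid E A) ≤ μ.real (avoid E (A ∪ B)) := by
  induction B using Finset.induction_on with
  | empty => simp
  | insert j B hjB ih =>
    obtain ⟨hAB, hjA⟩ : Disjoint A B ∧ j ∉ A := by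
      simpa [disjoint_insert_right, and_comm] using hAB
    have hjAB : j ∉ A ∪ B := by simp [hjA, hjB]
    have hABS : A ∪ B ⊂ S :=
      (ssubset_iff_of_subset (by grind)).2 ⟨j, hsub (by simp), hjAB⟩
    have hj := hcond _ hABS j hjAB
    have h1 : 0 ≤ 1 - x j := sub_nonneg.2 (hx j)
    rw [prod_insert hjB, union_insert, measureReal_avoid_insert (hE j), mul_assoc]
    calc (1 - x j) * ((∏ k ∈ B, (1 - x k)) * μ.real (avoid E A))
        ≤ (1 - x j) * μ.real (avoid E (A ∪ B)) := by gcongr; exact ih hAB (by grind)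
      _ ≤ _ := by linarith

lemma measureReal_inter_avoid_le (hx0 : ∀ j, 0 ≤ x j) (hx1 : ∀ j, x j ≤ 1)
    (hE : ∀ i, MeasurableSet (E i)) {Dep : ι → Finset ι}
    (hind : ∀ i S, (∀ j ∈ S, j ∉ Dep i ∧ j ≠ i) →
      μ (E i ∩ avoid E S) = μ (E i) * μ (avoid E S))
    (hbound : ∀ i, μ.real (E i) ≤ x i * ∏ j ∈ Dep i, (1 - x j)) {S : Finset ι}
    (hcond : ∀ T ⊂ S, ∀ j ∉ T, μ.real (E j ∩ avoid E T) ≤ x j * μ.real (avoid E T))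
    {i : ι} (hi : i ∉ S) :
    μ.real (E i ∩ avoid E S) ≤ x i * μ.real (avoid E S) := by
  set S₁ := S ∩ Dep i
  set S₂ := S \ Dep i
  have hindep : μ.real (E i ∩ avoid E S₂) = μ.real (E i) * μ.real (avoid E S₂) := by
    rw [measureReal_def, hind i S₂ (fun j hj ↦ ⟨(mem_sdiff.1 hj).2, by grind⟩),
      ENNReal.toReal_mul, measureReal_def, measureReal_def]
  have hpeel : (∏ j ∈ S₁, (1 - x j)) * μ.real (avoid E S₂) ≤ μ.real (avoid E S) := by
    simpa only [S₁, S₂, sdiff_union_inter] using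
      prod_one_sub_mul_measureReal_avoid_le hx1 hE hcond (disjoint_sdiff_inter S (Dep i))
        (sdiff_union_inter S (Dep i)).le
  have hprod : ∏ j ∈ Dep i, (1 - x j) ≤ ∏ j ∈ S₁, (1 - x j) :=
    prod_le_prod_of_subset_of_le_one inter_subset_right (fun j _ ↦ sub_nonneg.2 (hx1 j))
      (fun j _ _ ↦ sub_le_self _ (hx0 j))
  calc μ.real (E i ∩ avoid E S) ≤ μ.real (E i ∩ avoid E S₂) :=
        measureReal_mono (Set.inter_subset_inter_right _ (avoid_anti E sdiff_subset))
    _ = μ.real (E i) * μ.real (avoid E S₂) := hindep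
    _ ≤ (x i * ∏ j ∈ Dep i, (1 - x j)) * μ.real (avoid E S₂) := by gcongr; exact hbound i
    _ ≤ x i * ((∏ j ∈ S₁, (1 - x j)) * μ.real (avoid E S₂)) := by
        rw [mul_assoc]; gcongr; exact hx0 i
    _ ≤ x i * μ.real (avoid E S) := by gcongr; exact hx0 i

lemma measureReal_avoid_insert_pos {i : ι} (hxi : x i < 1) (hEi : MeasurableSet (E i))
    {S : Finset ι} (hpos : 0 < μ.real (avoid E S))
    (hcond : μ.real (E i ∩ avoid E S) ≤ x i * μ.real (avoid E S)) :
    0 < μ.real (avoid E (insert i S)) := by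
  rw [measureReal_avoid_insert hEi]
  nlinarith

theorem measureReal_avoid_pos_and_inter_le [NeZero μ] (hx0 : ∀ j, 0 ≤ x j)
    (hx1 : ∀ j, x j < 1)
    (hE : ∀ i, MeasurableSet (E i)) {Dep : ι → Finset ι}
    (hind : ∀ i S, (∀ j ∈ S, j ∉ Dep i ∧ j ≠ i) →
      μ (E i ∩ avoid E S) = μ (E i) * μ (avoid E S))
    (hbound : ∀ i, μ.real (E i) ≤ x i * ∏ j ∈ Dep i, (1 - x j)) (S : Finset ι) :
    0 < μ.real (avoid E S) ∧
      ∀ i ∉ S, μ.real (E i ∩ avoid E S) ≤ x i * μ.real (avoid E S) := by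
  induction S using Finset.strongInduction with
  | H S ih =>
    refine ⟨?_, fun i hi ↦ measureReal_inter_avoid_le hx0 (fun j ↦ (hx1 j).le) hE hind hbound
      (fun T hT ↦ (ih T hT).2) hi⟩
    rcases S.eq_empty_or_nonempty with rfl | ⟨i, hi⟩
    · simp
    · obtain ⟨hpos, hcond⟩ := ih _ (erase_ssubset hi)
      rw [← insert_erase hi]
      exact measureReal_avoid_insert_pos (hx1 i) (hE i) hpos (hcond i (notMem_erase i S))

theorem measure_iInter_compl_pos [Fintype ι] [NeZero μ] (hx0 : ∀ j, 0 ≤ x j)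
    (hx1 : ∀ j, x j < 1) (hE : ∀ i, MeasurableSet (E i)) {Dep : ι → Finset ι}
    (hind : ∀ i S, (∀ j ∈ S, j ∉ Dep i ∧ j ≠ i) →
      μ (E i ∩ avoid E S) = μ (E i) * μ (avoid E S))
    (hbound : ∀ i, μ.real (E i) ≤ x i * ∏ j ∈ Dep i, (1 - x j)) :
    0 < μ (⋂ i, (E i)ᶜ) := by
  have h := (measureReal_avoid_pos_and_inter_le hx0 hx1 hE hind hbound univ).1
  rw [avoid_univ] at h
  exact (ENNReal.toReal_pos_iff.1 h).1

end LovaszLocalLemma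

lemma le_inv_mul_one_sub_inv_pow {D : ℕ} {p : ℝ} (h : Real.exp 1 * p * (D + 1) ≤ 1) :
    p ≤ ((D : ℝ) + 2)⁻¹ * (1 - ((D : ℝ) + 2)⁻¹) ^ D := by
  have hD : (0 : ℝ) < D + 1 := by positivity
  have hx : ((D : ℝ) + 2)⁻¹ * (1 - ((D : ℝ) + 2)⁻¹) ^ D =
      (D + 1) ^ D / (D + 2) ^ (D + 1) := by
    rw [show 1 - ((D : ℝ) + 2)⁻¹ = (D + 1) / (D + 2) by field_simp; ring, div_pow, pow_succ]
    field_simp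
  have he : ((D : ℝ) + 2) ^ (D + 1) ≤ Real.exp 1 * (D + 1) ^ (D + 1) := by
    have h1 := Real.one_add_inv_pow_le_exp (n := D + 1)
    rw [show 1 + ((D + 1 : ℕ) : ℝ)⁻¹ = (D + 2) / (D + 1) by push_cast; field_simp; ring,
      div_pow, div_le_iff₀ (by positivity)] at h1
    exact h1
  rw [hx, le_div_iff₀ (by positivity)]
  rcases le_or_gt p 0 with hp | hp
  · nlinarith [pow_pos hD D, pow_pos (by positivity : (0 : ℝ) < D + 2) (D + 1)]
  · calc p * (D + 2) ^ (D + 1) ≤ p * (Real.exp 1 * (D + 1) ^ (D + 1)) := by gcongr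
      _ = Real.exp 1 * p * (D + 1) * (D + 1) ^ D := by ring
      _ ≤ (D + 1) ^ D := by nlinarith [pow_pos hD D]

open LovaszLocalLemma in
/-- Symmetric Lovász Local Lemma: if each bad event has probability at most `p`, each is
mutually independent of all but at most `D` of the other events, and `e·p·(D+1) ≤ 1`,
then with positive probability none of the events occur. -/
theorem stmt_16 {Ω : Type*} [MeasurableSpace Ω] (μ : Measure Ω) [IsProbabilityMeasure μ]
    (n : ℕ) (E : Fin n → Set Ω) (hE : ∀ i, MeasurableSet (E i))
    (D : ℕ) (Dep : Fin n → Finset (Fin n)) (hD : ∀ i, (Dep i).card ≤ D)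
    (hind : ∀ (i : Fin n) (S : Finset (Fin n)), (∀ j ∈ S, j ∉ Dep i ∧ j ≠ i) →
      μ (E i ∩ ⋂ j ∈ S, (E j)ᶜ) = μ (E i) * μ (⋂ j ∈ S, (E j)ᶜ))
    (p : ℝ) (hp : ∀ i, (μ (E i)).toReal ≤ p)
    (hlll : Real.exp 1 * p * (D + 1) ≤ 1) :
    0 < μ (⋂ i, (E i)ᶜ) := by
  set x : ℝ := ((D : ℝ) + 2)⁻¹
  have hx0 : 0 ≤ x := by positivity
  have hx1 : x < 1 := inv_lt_one_of_one_lt₀ (by linarith [(Nat.cast_nonneg D : (0 : ℝ) ≤ D)])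
  refine measure_iInter_compl_pos (x := fun _ ↦ x) (fun _ ↦ hx0) (fun _ ↦ hx1) hE hind
    fun i ↦ ?_
  calc μ.real (E i) ≤ p := hp i
    _ ≤ x * (1 - x) ^ D := le_inv_mul_one_sub_inv_pow hlll
    _ ≤ x * (1 - x) ^ (Dep i).card :=
        mul_le_mul_of_nonneg_left (pow_le_pow_of_le_one (by linarith) (by linarith) (hD i)) hx0
    _ = x * ∏ _ ∈ Dep i, (1 - x) := by rw [prod_const]
end
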